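/- arXiv:1407.6929 — 3 statements merged into one kernel-verified Lean document; each statement's English description precedes it below -/
import Mathlib

section
/- Let A be a unital C*-algebra and let τ : A → A be a linear map that is positive (τ(a) is positive whenever a is positive) and tracial (τ(ab) = τ(ba) for all a, b ∈ A). Suppose there exists an integer n₀ ≥ 2 with the following property: for every ε > 0 and every finite family a₁, …, a_k ∈ A there exist n₀ mutually orthogonal, pairwise equivalent projections p₁, …, p_{n₀} in A with p₁ + ⋯ + p_{n₀} = 1 such that τ((p_i a_j − a_j p_i)*(p_i a_j − a_j p_i)) ≤ ε·1 for all 1 ≤ i ≤ n₀ and 1 ≤ j ≤ k. Then for every ε > 0 and every finite family a₁, …, a_k ∈ A there exists a unitary u ∈ A such that τ(u) = 0 and τ((u a_j − a_j u)*(u a_j − a_j u)) ≤ ε·1 for all 1 ≤ j ≤ k. -/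
open scoped ComplexOrder

/-!
With `ζ` a primitive `n₀`-th root of unity and `p₁, …, p_{n₀}` the almost central projections,
`u = ∑ ζ^i p_i` is unitary. Equivalent projections have equal trace, so `τ u = (∑ ζ^i) τ(p₁) = 0`.
The commutator `[u, a]` is `∑ ζ^i [p_i, a]`, and the operator inequality
`(∑ x_i)^*(∑ x_i) ≤ n ∑ x_i^* x_i` together with positivity of `τ` bounds
`τ([u, a]^*[u, a])` by `n₀²` times the bound for the projections.
-/

section StarOrderedRing

variable {R : Type*} [NonUnitalRing R] [StarRing R] [PartialOrder R] [StarOrderedRing R]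

theorem star_mul_add_star_mul_le (x y : R) :
    star x * y + star y * x ≤ star x * x + star y * y := by
  have h := star_mul_self_nonneg (x - y)
  rw [star_sub, ← sub_nonneg] at *
  convert h using 1
  noncomm_ring

theorem star_sum_mul_sum_le_card_nsmul {ι : Type*} (s : Finset ι) (x : ι → R) :
    star (∑ i ∈ s, x i) * ∑ i ∈ s, x i ≤ s.card • ∑ i ∈ s, star (x i) * x i := by
  classical
  induction s using Finset.induction_on with
  | empty => simp
  | insert a s ha ih =>
    rw [Finset.sum_insert ha, Finset.sum_insert ha, Finset.card_insert_of_notMem ha]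
    set y := ∑ i ∈ s, x i
    set S := ∑ i ∈ s, star (x i) * x i
    have cross : star (x a) * y + star y * x a ≤ s.card • (star (x a) * x a) + S := by
      simpa [y, S, star_sum, Finset.mul_sum, Finset.sum_mul, Finset.sum_add_distrib] using
        Finset.sum_le_sum fun i (_ : i ∈ s) => star_mul_add_star_mul_le (x a) (x i)
    calc star (x a + y) * (x a + y)
        = star (x a) * x a + (star (x a) * y + star y * x a) + star y * y := by
          rw [star_add]; noncomm_ring
      _ ≤ star (x a) * x a + (s.card • (star (x a) * x a) + S) + s.card • S := by
          gcongr
      _ = (s.card + 1) • (star (x a) * x a + S) := by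
          rw [succ_nsmul, nsmul_add]; abel

end StarOrderedRing

section OrthogonalIdempotents

variable {R A ι : Type*} [Fintype ι] {e : ι → A}

theorem OrthogonalIdempotents.sum_smul_mul_sum_smul [CommSemiring R] [Semiring A] [Algebra R A]
    (he : OrthogonalIdempotents e) (c d : ι → R) :
    (∑ i, c i • e i) * ∑ i, d i • e i = ∑ i, (c i * d i) • e i := by
  classical
  simp [Finset.sum_mul, Finset.mul_sum, he.mul_eq, smul_smul, mul_comm]

theorem CompleteOrthogonalIdempotents.sum_smul_mem_unitary [CommSemiring R] [StarRing R]
    [Semiring A] [StarRing A] [Algebra R A] [StarModule R A]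
    (he : CompleteOrthogonalIdempotents e) (hsa : ∀ i, IsSelfAdjoint (e i))
    {c : ι → R} (hc : ∀ i, c i ∈ unitary R) : ∑ i, c i • e i ∈ unitary A := by
  have hstar : star (∑ i, c i • e i) = ∑ i, star (c i) • e i := by
    simp only [star_sum, star_smul, (hsa _).star_eq]
  rw [Unitary.mem_iff, hstar, he.sum_smul_mul_sum_smul, he.sum_smul_mul_sum_smul]
  simp only [Unitary.star_mul_self_of_mem (hc _), Unitary.mul_star_self_of_mem (hc _), one_smul,
    he.complete, and_self]

end OrthogonalIdempotents

theorem star_sum_smul_mul_sum_smul_le {R A ι : Type*} [CommSemiring R] [StarRing R]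
    [NonUnitalRing A] [StarRing A] [PartialOrder A] [StarOrderedRing A] [Module R A]
    [IsScalarTower R A A] [SMulCommClass R A A] [StarModule R A] [Fintype ι]
    {c : ι → R} (hc : ∀ i, c i ∈ unitary R) (x : ι → A) :
    star (∑ i, c i • x i) * ∑ i, c i • x i ≤ Fintype.card ι • ∑ i, star (x i) * x i := by
  have hunit : ∀ i, star (c i • x i) * (c i • x i) = star (x i) * x i := fun i => by
    rw [star_smul, smul_mul_smul_comm, Unitary.star_mul_self_of_mem (hc i), one_smul]
  simpa only [hunit, Finset.card_univ] using
    star_sum_mul_sum_le_card_nsmul Finset.univ fun i => c i • x i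

/-- Theorem 3.3, (iv) ⇒ (v), for a positive tracial linear map `τ`. -/
theorem stmt_0 {A : Type*} [CStarAlgebra A] [PartialOrder A] [StarOrderedRing A]
    (τ : A →ₗ[ℂ] A)
    (hτpos : ∀ a : A, 0 ≤ a → 0 ≤ τ a)
    (hτtr : ∀ a b : A, τ (a * b) = τ (b * a))
    (h : ∃ n₀ : ℕ, 2 ≤ n₀ ∧ ∀ (ε : ℝ), 0 < ε → ∀ (k : ℕ) (a : Fin k → A),
      ∃ p : Fin n₀ → A,
        (∀ i, star (p i) = p i ∧ p i * p i = p i) ∧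
        (∀ i i', i ≠ i' → p i * p i' = 0) ∧
        (∀ i i', ∃ v : A, star v * v = p i ∧ v * star v = p i') ∧
        (∑ i, p i = 1) ∧
        (∀ (i : Fin n₀) (j : Fin k),
          τ (star (p i * a j - a j * p i) * (p i * a j - a j * p i)) ≤ (ε : ℂ) • (1 : A))) :
    ∀ (ε : ℝ), 0 < ε → ∀ (k : ℕ) (a : Fin k → A),
      ∃ u : A, star u * u = 1 ∧ u * star u = 1 ∧ τ u = 0 ∧
        ∀ j : Fin k,
          τ (star (u * a j - a j * u) * (u * a j - a j * u)) ≤ (ε : ℂ) • (1 : A) := by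
  obtain ⟨n, hn, hproj⟩ := h
  intro ε hε k a
  obtain ⟨p, hsa, horth, hequiv, hsum, hcomm⟩ := hproj (ε / n ^ 2) (by positivity) k a
  have hp : CompleteOrthogonalIdempotents p := ⟨⟨fun i => (hsa i).2, horth⟩, hsum⟩
  have hζ := Complex.isPrimitiveRoot_exp n (by omega)
  set ζ := Complex.exp (2 * Real.pi * Complex.I / n)
  have hζu : ∀ i : Fin n, ζ ^ (i : ℕ) ∈ unitary ℂ := fun i => by
    refine pow_mem (Unitary.mem_iff_star_mul_self.2 ?_) _
    rw [Complex.star_def, Complex.conj_mul', hζ.norm'_eq_one (by omega)]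
    norm_num
  set u := ∑ i : Fin n, ζ ^ (i : ℕ) • p i
  have hu : u ∈ unitary A := hp.sum_smul_mem_unitary (fun i => (hsa i).1) hζu
  refine ⟨u, hu.1, hu.2, ?_, fun j => ?_⟩
  · have hτp : ∀ i, τ (p i) = τ (p ⟨0, by omega⟩) := fun i => by
      obtain ⟨v, hv, hv'⟩ := hequiv i ⟨0, by omega⟩
      rw [← hv, ← hv', hτtr]
    simp only [u, map_sum, map_smul, hτp, ← Finset.sum_smul,
      Fin.sum_univ_eq_sum_range (fun i => ζ ^ i), hζ.geom_sum_eq_zero (by omega), zero_smul]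
  · have hcommu : u * a j - a j * u = ∑ i : Fin n, ζ ^ (i : ℕ) • (p i * a j - a j * p i) := by
      simp only [u, Finset.sum_mul, Finset.mul_sum, ← Finset.sum_sub_distrib, smul_sub,
        smul_mul_assoc, mul_smul_comm]
    calc τ (star (u * a j - a j * u) * (u * a j - a j * u))
        ≤ τ (n • ∑ i, star (p i * a j - a j * p i) * (p i * a j - a j * p i)) := by
          have := star_sum_smul_mul_sum_smul_le hζu fun i => p i * a j - a j * p i
          rw [Fintype.card_fin, ← hcommu] at this
          exact (PositiveLinearMap.mk₀ τ hτpos).monotone this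
      _ ≤ n • ∑ _i : Fin n, ((ε / n ^ 2 : ℝ) : ℂ) • (1 : A) := by
          rw [map_nsmul, map_sum]
          gcongr with i
          exact hcomm i j
      _ = (ε : ℂ) • (1 : A) := by
          rw [Finset.sum_const, Finset.card_fin, smul_smul, ← Nat.cast_smul_eq_nsmul ℂ,
            smul_smul]
          congr 1
          push_cast
          field_simp
end

section
/- Let A be a unital C*-algebra and let τ : A → A be a linear map with τ(ab) = τ(ba) for all a, b ∈ A. Suppose there exists an integer n₀ ≥ 2 with the following property: for every tracial state ρ on A, every ε > 0 and every finite family a₁, …, a_k ∈ A there exist n₀ mutually orthogonal, pairwise equivalent projections p₁, …, p_{n₀} in A with p₁ + ⋯ + p_{n₀} = 1 such that ‖p_i a_j − a_j p_i‖_{2,ρ} < ε for all 1 ≤ i ≤ n₀ and 1 ≤ j ≤ k. Then for every tracial state ρ on A, every ε > 0 and every finite family a₁, …, a_k ∈ A there exists a unitary u ∈ A such that τ(u) = 0 and ‖u a_j − a_j u‖_{2,ρ} < ε for all 1 ≤ j ≤ k. -/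
open scoped ComplexOrder

/-!
Take the projections `p₁, …, pₙ` given by the hypothesis for `ε / n` and put
`u = ∑ ζ^i pᵢ` with `ζ` a primitive `n`-th root of unity. Orthogonality makes `u` unitary.
Equivalent projections `v*v` and `vv*` have the same trace, so `τ u = (∑ ζ^i) τ(p₁) = 0`.
Finally `[u, a] = ∑ ζ^i [pᵢ, a]`, and the `2`-seminorm of a sum of `n` terms of norm `< ε / n`
is `< ε`.
-/

section PositiveFunctional

variable {A F ι : Type*} [NonUnitalRing A] [StarRing A] [FunLike F A ℂ] [AddMonoidHomClass F A ℂ]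
  [Fintype ι]

/-- `0 ≤ ∑ᵢ ∑ⱼ ρ((xᵢ - xⱼ)*(xᵢ - xⱼ)) = 2n ∑ᵢ ρ(xᵢ*xᵢ) - 2 ρ((∑ xᵢ)*(∑ xᵢ))`. -/
theorem re_map_star_sum_mul_sum_le (ρ : F) (hρ : ∀ x : A, 0 ≤ ρ (star x * x)) (x : ι → A) :
    (ρ (star (∑ i, x i) * ∑ i, x i)).re ≤ Fintype.card ι * ∑ i, (ρ (star (x i) * x i)).re := by
  set q : ι → ι → ℝ := fun i j => (ρ (star (x i) * x j)).re
  have hsum : (ρ (star (∑ i, x i) * ∑ i, x i)).re = ∑ i, ∑ j, q i j := by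
    simp only [q, star_sum, Finset.sum_mul_sum, map_sum, Complex.re_sum]
  have hdiff : ∀ i j, (ρ (star (x i - x j) * (x i - x j))).re = q i i - q i j - q j i + q j j := by
    intro i j
    simp only [q, star_sub, sub_mul, mul_sub, map_sub, Complex.sub_re]
    ring
  have hnonneg : 0 ≤ ∑ i, ∑ j, (q i i - q i j - q j i + q j j) :=
    Finset.sum_nonneg fun i _ => Finset.sum_nonneg fun j _ =>
      hdiff i j ▸ (Complex.le_def.mp (hρ (x i - x j))).1
  have hswap : ∑ i, ∑ j, q j i = ∑ i, ∑ j, q i j := Finset.sum_comm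
  simp only [Finset.sum_add_distrib, Finset.sum_sub_distrib, Finset.sum_const, Finset.card_univ,
    nsmul_eq_mul, hswap, ← Finset.mul_sum] at hnonneg
  rw [hsum]
  linarith

theorem sqrt_re_map_star_sum_mul_sum_lt (ρ : F) (hρ : ∀ x : A, 0 ≤ ρ (star x * x)) [Nonempty ι]
    {x : ι → A} {δ : ℝ} (hx : ∀ i, √(ρ (star (x i) * x i)).re < δ) :
    √(ρ (star (∑ i, x i) * ∑ i, x i)).re < Fintype.card ι * δ := by
  have hδ : 0 < δ := (Real.sqrt_nonneg _).trans_lt (hx (Classical.arbitrary ι))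
  have hcard : (0 : ℝ) < Fintype.card ι := by exact_mod_cast Fintype.card_pos
  rw [Real.sqrt_lt' (by positivity)]
  calc (ρ (star (∑ i, x i) * ∑ i, x i)).re
      ≤ Fintype.card ι * ∑ i, (ρ (star (x i) * x i)).re := re_map_star_sum_mul_sum_le ρ hρ x
    _ < Fintype.card ι * ∑ _i : ι, δ ^ 2 := by
      gcongr with i
      · exact Finset.univ_nonempty
      · exact Real.lt_sq_of_sqrt_lt (hx i)
    _ = (Fintype.card ι * δ) ^ 2 := by simp only [Finset.sum_const, Finset.card_univ, nsmul_eq_mul]; ring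

end PositiveFunctional

section OrthogonalProjections

variable {R A ι : Type*} [CommSemiring R] [Semiring A] [Algebra R A] [Fintype ι] {p : ι → A}

theorem sum_smul_mul_sum_smul_of_orthogonal (hidem : ∀ i, p i * p i = p i)
    (horth : Pairwise fun i j => p i * p j = 0) (c d : ι → R) :
    (∑ i, c i • p i) * (∑ i, d i • p i) = ∑ i, (c i * d i) • p i := by
  rw [Finset.sum_mul_sum]
  refine Finset.sum_congr rfl fun i _ => ?_
  rw [Finset.sum_eq_single i (fun j _ hji => by rw [smul_mul_smul_comm, horth hji.symm, smul_zero])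
    (fun hi => absurd (Finset.mem_univ i) hi), smul_mul_smul_comm, hidem]

theorem sum_smul_mem_unitary [StarRing R] [StarRing A] [StarModule R A]
    (hp : ∀ i, star (p i) = p i ∧ p i * p i = p i) (horth : Pairwise fun i j => p i * p j = 0)
    (hsum : ∑ i, p i = 1) {c : ι → R} (hc : ∀ i, c i ∈ unitary R) :
    ∑ i, c i • p i ∈ unitary A := by
  have hstar : star (∑ i, c i • p i) = ∑ i, star (c i) • p i := by
    simp only [star_sum, star_smul, (hp _).1]
  have hidem : ∀ i, p i * p i = p i := fun i => (hp i).2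
  rw [Unitary.mem_iff, hstar, sum_smul_mul_sum_smul_of_orthogonal hidem horth,
    sum_smul_mul_sum_smul_of_orthogonal hidem horth]
  simp only [Unitary.star_mul_self_of_mem (hc _), Unitary.mul_star_self_of_mem (hc _), one_smul,
    hsum, and_self]

end OrthogonalProjections

theorem sum_smul_mul_sub_mul_sum_smul {R A ι : Type*} [CommSemiring R] [Ring A] [Algebra R A]
    [Fintype ι] (p : ι → A) (c : ι → R) (a : A) :
    (∑ i, c i • p i) * a - a * ∑ i, c i • p i = ∑ i, c i • (p i * a - a * p i) := by
  simp only [Finset.sum_mul, Finset.mul_sum, ← Finset.sum_sub_distrib, smul_mul_assoc,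
    mul_smul_comm, smul_sub]

theorem map_sum_smul_eq_zero_of_equiv {R A M ι : Type*} [CommSemiring R] [Semiring A] [Star A]
    [Module R A] [AddCommMonoid M] [Module R M] [Fintype ι] (τ : A →ₗ[R] M)
    (hτ : ∀ a b : A, τ (a * b) = τ (b * a)) {p : ι → A}
    (hequiv : ∀ i j, ∃ v : A, star v * v = p i ∧ v * star v = p j) {c : ι → R}
    (hc : ∑ i, c i = 0) : τ (∑ i, c i • p i) = 0 := by
  rcases isEmpty_or_nonempty ι with _ | ⟨⟨i₀⟩⟩
  · simp
  have hτp : ∀ i, τ (p i) = τ (p i₀) := fun i => by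
    obtain ⟨v, hv₁, hv₂⟩ := hequiv i i₀
    rw [← hv₁, ← hv₂, hτ]
  simp only [map_sum, map_smul, hτp, ← Finset.sum_smul, hc, zero_smul]

theorem star_smul_mul_smul_of_mem_unitary {R A : Type*} [CommSemiring R] [StarRing R]
    [Semiring A] [StarRing A] [Algebra R A] [StarModule R A] {c : R} (hc : c ∈ unitary R)
    (x : A) : star (c • x) * (c • x) = star x * x := by
  rw [star_smul, smul_mul_smul_comm, Unitary.star_mul_self_of_mem hc, one_smul]

theorem IsPrimitiveRoot.mem_unitary {ζ : ℂ} {n : ℕ} (hζ : IsPrimitiveRoot ζ n) (hn : n ≠ 0) :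
    ζ ∈ unitary ℂ := by
  rw [Unitary.mem_iff_star_mul_self, RCLike.star_def, RCLike.conj_mul, hζ.norm'_eq_one hn]
  simp

/-- Theorem 3.3, (vii) ⇒ (viii), for tracial states and a tracial linear map `τ`. -/
theorem stmt_2 {A : Type*} [CStarAlgebra A]
    (τ : A →ₗ[ℂ] A)
    (hτtr : ∀ a b : A, τ (a * b) = τ (b * a))
    (h : ∃ n₀ : ℕ, 2 ≤ n₀ ∧ ∀ (ρ : A →L[ℂ] ℂ), ρ 1 = 1 →
      (∀ x : A, 0 ≤ ρ (star x * x)) → (∀ a b : A, ρ (a * b) = ρ (b * a)) →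
      ∀ (ε : ℝ), 0 < ε → ∀ (k : ℕ) (a : Fin k → A),
      ∃ p : Fin n₀ → A,
        (∀ i, star (p i) = p i ∧ p i * p i = p i) ∧
        (∀ i i', i ≠ i' → p i * p i' = 0) ∧
        (∀ i i', ∃ v : A, star v * v = p i ∧ v * star v = p i') ∧
        (∑ i, p i = 1) ∧
        (∀ (i : Fin n₀) (j : Fin k),
          Real.sqrt (ρ (star (p i * a j - a j * p i) * (p i * a j - a j * p i))).re < ε)) :
    ∀ (ρ : A →L[ℂ] ℂ), ρ 1 = 1 → (∀ x : A, 0 ≤ ρ (star x * x)) →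
      (∀ a b : A, ρ (a * b) = ρ (b * a)) →
      ∀ (ε : ℝ), 0 < ε → ∀ (k : ℕ) (a : Fin k → A),
      ∃ u : A, star u * u = 1 ∧ u * star u = 1 ∧ τ u = 0 ∧
        ∀ j : Fin k,
          Real.sqrt (ρ (star (u * a j - a j * u) * (u * a j - a j * u))).re < ε := by
  obtain ⟨n, hn, hproj⟩ := h
  intro ρ hρ1 hρpos hρtr ε hε k a
  have hn0 : n ≠ 0 := by omega
  have : NeZero n := ⟨hn0⟩
  obtain ⟨p, hp, horth, hequiv, hsum, hcomm⟩ :=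
    hproj ρ hρ1 hρpos hρtr (ε / n) (by positivity) k a
  obtain ⟨ζ, hζ⟩ : ∃ ζ : ℂ, IsPrimitiveRoot ζ n := ⟨_, Complex.isPrimitiveRoot_exp n hn0⟩
  have hc : ∀ i : Fin n, ζ ^ (i : ℕ) ∈ unitary ℂ := fun i => pow_mem (hζ.mem_unitary hn0) _
  have hu := sum_smul_mem_unitary hp horth hsum hc
  refine ⟨_, Unitary.star_mul_self_of_mem hu, Unitary.mul_star_self_of_mem hu,
    map_sum_smul_eq_zero_of_equiv τ hτtr hequiv ?_, fun j => ?_⟩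
  · rw [Fin.sum_univ_eq_sum_range (ζ ^ ·) n, hζ.geom_sum_eq_zero (by omega)]
  · rw [sum_smul_mul_sub_mul_sum_smul]
    calc _ < (Fintype.card (Fin n) : ℝ) * (ε / n) :=
          sqrt_re_map_star_sum_mul_sum_lt ρ hρpos fun i => by
            rw [star_smul_mul_smul_of_mem_unitary (hc i)]
            exact hcomm i j
      _ = ε := by rw [Fintype.card_fin]; field_simp
end

section
/- Let A be a unital C*-algebra and let τ : A → A be a map with the Dixmier approximation property. Let x ∈ A and ε > 0, and suppose that ε·1 − τ(x*x) is a positive element of A. Then for every tracial state ρ on A one has ρ(x*x) ≤ 2ε. -/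
open scoped ComplexOrder

/-!
A tracial functional does not see unitary conjugation, so `ρ (x⋆x) = ρ S` for a Dixmier average
`S` of `x⋆x` within `ε` of `τ (x⋆x)`. In the order of `A`,
`S ≤ τ (x⋆x) + ‖S - τ (x⋆x)‖ ≤ ε + ε`, and a positive functional is monotone.
-/

lemma monotone_of_map_star_mul_self_nonneg {A B F : Type*} [NonUnitalRing A] [StarRing A]
    [PartialOrder A] [StarOrderedRing A] [AddCommGroup B] [PartialOrder B] [IsOrderedAddMonoid B]
    [FunLike F A B] [AddMonoidHomClass F A B] (f : F) (hf : ∀ y, 0 ≤ f (star y * y)) :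
    Monotone f := by
  have map_nonneg : ∀ p : A, 0 ≤ p → 0 ≤ f p := by
    intro p hp
    rw [StarOrderedRing.nonneg_iff] at hp
    induction hp using AddSubmonoid.closure_induction with
    | mem y hy => obtain ⟨s, rfl⟩ := hy; exact hf s
    | zero => simp
    | add b c _ _ hb hc => rw [map_add]; exact add_nonneg hb hc
  intro b c hbc
  simpa using map_nonneg (c - b) (sub_nonneg.mpr hbc)

section Tracial

variable {R A M : Type*} [Semiring R] [Semiring A] [StarMul A] [Module R A] [AddCommMonoid M]
  [Module R M] (ρ : A →ₗ[R] M) (htr : ∀ a b, ρ (a * b) = ρ (b * a))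
include htr

lemma map_star_mul_mul_eq_of_mul_star_eq_one {u : A} (hu : u * star u = 1) (a : A) :
    ρ (star u * a * u) = ρ a := by
  rw [htr, ← mul_assoc, hu, one_mul]

lemma map_sum_smul_star_mul_mul_eq {ι : Type*} (s : Finset ι) {v : ι → A}
    (hv : ∀ j, v j * star (v j) = 1) {lam : ι → R} (hlam : ∑ j ∈ s, lam j = 1) (a : A) :
    ρ (∑ j ∈ s, lam j • (star (v j) * a * v j)) = ρ a := by
  simp only [map_sum, map_smul, map_star_mul_mul_eq_of_mul_star_eq_one ρ htr (hv _),
    ← Finset.sum_smul, hlam, one_smul]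

end Tracial

lemma IsSelfAdjoint.sum_smul_star_mul_mul {R A ι : Type*} [Semiring R] [Star R] [TrivialStar R]
    [Semiring A] [StarRing A] [Module R A] [StarModule R A] (s : Finset ι) (lam : ι → R)
    (v : ι → A) {a : A} (ha : IsSelfAdjoint a) :
    IsSelfAdjoint (∑ j ∈ s, lam j • (star (v j) * a * v j)) :=
  isSelfAdjoint_sum s fun j _ => (IsSelfAdjoint.all (lam j)).smul (ha.conjugate' (v j))

lemma IsSelfAdjoint.le_algebraMap_of_norm_le {A : Type*} [CStarAlgebra A] [PartialOrder A]
    [StarOrderedRing A] {a : A} (ha : IsSelfAdjoint a) {r : ℝ} (hr : ‖a‖ ≤ r) :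
    a ≤ algebraMap ℝ A r :=
  ha.le_algebraMap_norm_self.trans (algebraMap_mono A hr)

/-- Lemma 3.5: if `τ` has the Dixmier approximation property and `τ(x*x) ≤ ε·1`,
then `ρ(x*x) ≤ 2ε` for every tracial state `ρ`. -/
theorem stmt_3 {A : Type*} [CStarAlgebra A] [PartialOrder A] [StarOrderedRing A]
    (τ : A → A)
    (hdix : ∀ (a : A) (δ : ℝ), 0 < δ → ∃ (m : ℕ) (v : Fin m → A) (lam : Fin m → ℝ),
      (∀ j, star (v j) * v j = 1 ∧ v j * star (v j) = 1) ∧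
      (∀ j, lam j ∈ Set.Icc (0 : ℝ) 1) ∧ (∑ j, lam j = 1) ∧
      ‖(∑ j, (lam j : ℂ) • (star (v j) * a * v j)) - τ a‖ < δ)
    (x : A) (ε : ℝ) (hε : 0 < ε)
    (hx : 0 ≤ (ε : ℂ) • (1 : A) - τ (star x * x)) :
    ∀ (ρ : A →L[ℂ] ℂ), ρ 1 = 1 → (∀ y : A, 0 ≤ ρ (star y * y)) →
      (∀ a b : A, ρ (a * b) = ρ (b * a)) →
      ρ (star x * x) ≤ ((2 * ε : ℝ) : ℂ) := by
  intro ρ hρ1 hρpos htr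
  obtain ⟨m, v, lam, hv, -, hsum, hnear⟩ := hdix (star x * x) ε hε
  simp only [Complex.coe_smul] at hx hnear
  set S := ∑ j, lam j • (star (v j) * (star x * x) * v j)
  have hτ_le : τ (star x * x) ≤ algebraMap ℝ A ε := by
    rwa [Algebra.algebraMap_eq_smul_one, ← sub_nonneg]
  have hτ_sa : IsSelfAdjoint (τ (star x * x)) := by
    simpa [Algebra.algebraMap_eq_smul_one] using
      (IsSelfAdjoint.algebraMap A (.all ε)).sub (IsSelfAdjoint.of_nonneg hx)
  have hS_le : S ≤ algebraMap ℝ A (2 * ε) :=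
    calc S = τ (star x * x) + (S - τ (star x * x)) := by abel
      _ ≤ algebraMap ℝ A ε + algebraMap ℝ A ε := by
        refine add_le_add hτ_le (IsSelfAdjoint.le_algebraMap_of_norm_le ?_ hnear.le)
        exact (IsSelfAdjoint.sum_smul_star_mul_mul _ lam v (.star_mul_self x)).sub hτ_sa
      _ = algebraMap ℝ A (2 * ε) := by rw [two_mul, map_add]
  calc ρ (star x * x) = ρ S := (map_sum_smul_star_mul_mul_eq (ρ.toLinearMap.restrictScalars ℝ)
        htr _ (fun j => (hv j).2) hsum _).symm
    _ ≤ ρ (algebraMap ℝ A (2 * ε)) := monotone_of_map_star_mul_self_nonneg ρ hρpos hS_le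
    _ = ((2 * ε : ℝ) : ℂ) := by simp [Algebra.algebraMap_eq_smul_one, hρ1]
end
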